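/- Let Φ = (G, φ) be a connected T-gain graph on n vertices, and let C_1,…,C_l be the fundamental cycles of G with respect to a spanning tree T. Then E(Φ) ≥ 2 Σ_{j=1}^l Re(φ(C_j)) + (5n − n² − 4), with equality attained when Φ ∼ (K_n, 1). -/

import Mathlib

open Matrix BigOperators
open scoped Classical ComplexOrder

/-- A complex unit gain graph (`𝕋`-gain graph) on a finite vertex type `V`. -/
structure TGainGraph (V : Type*) [Fintype V] [DecidableEq V] where
  G : SimpleGraph V
  A : Matrix V V ℂ
  herm : A.IsHermitian
  unitGain : ∀ i j, G.Adj i j → ‖A i j‖ = 1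
  zeroGain : ∀ i j, ¬ G.Adj i j → A i j = 0

namespace TGainGraph

variable {V : Type*} [Fintype V] [DecidableEq V]

/-- The energy of a `𝕋`-gain graph: sum of absolute values of eigenvalues of `A(Φ)`. -/
noncomputable def energy (Φ : TGainGraph V) : ℝ :=
  ∑ i, |Φ.herm.eigenvalues i|

/-- `|A(Φ)| = (A(Φ) A(Φ)ᴴ)^{1/2}`. -/
noncomputable def absMatrix (Φ : TGainGraph V) : Matrix V V ℂ :=
  (Matrix.posSemidef_self_mul_conjTranspose Φ.A).1.eigenvectorUnitary.1 *
    diagonal ((↑) ∘ (√·) ∘ (Matrix.posSemidef_self_mul_conjTranspose Φ.A).1.eigenvalues) *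
    (star (Matrix.posSemidef_self_mul_conjTranspose Φ.A).1.eigenvectorUnitary : Matrix V V ℂ)

/-- Energy of a vertex: the `(i,i)` entry of `|A(Φ)|`. -/
noncomputable def vertexEnergy (Φ : TGainGraph V) (i : V) : ℝ :=
  (Φ.absMatrix i i).re

/-- Degree of a vertex in the underlying graph. -/
noncomputable def deg (Φ : TGainGraph V) (i : V) : ℕ := Φ.G.degree i

/-- Maximum vertex degree of the underlying graph. -/
noncomputable def maxDeg (Φ : TGainGraph V) : ℕ := Φ.G.maxDegree

/-- Spectral radius of `A(Φ)`. -/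
noncomputable def specRadius (Φ : TGainGraph V) : ℝ :=
  ⨆ i, |Φ.herm.eigenvalues i|

/-- Switching equivalence of two gain graphs on the same vertex set: same
underlying graph, and adjacency matrices conjugate by a diagonal unitary. -/
def SwitchEquiv (Φ₁ Φ₂ : TGainGraph V) : Prop :=
  Φ₁.G = Φ₂.G ∧ ∃ U : Matrix V V ℂ, U.IsDiag ∧ U ∈ Matrix.unitaryGroup V ℂ ∧
    Φ₁.A = U * Φ₂.A * Uᴴ

/-- `Φ` switches to the all-ones gain on its underlying graph,
i.e. `Φ ∼ (G, 1)` (equivalently, `Φ` is balanced). -/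
def SwitchesToOne (Φ : TGainGraph V) : Prop :=
  ∃ U : Matrix V V ℂ, U.IsDiag ∧ U ∈ Matrix.unitaryGroup V ℂ ∧
    Φ.A = U * (Φ.G.adjMatrix ℂ) * Uᴴ

/-- `Φ ∼ (K_{a,b}, 1)`: the underlying graph is (isomorphic to) the complete
bipartite graph `K_{a,b}` via some bijection `e`, and the gains switch to `1`. -/
def SwitchEquivToCompleteBipartite (Φ : TGainGraph V) (a b : ℕ) : Prop :=
  (∃ e : V ≃ (Fin a ⊕ Fin b), ∀ i j, Φ.G.Adj i j ↔
      (completeBipartiteGraph (Fin a) (Fin b)).Adj (e i) (e j)) ∧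
  SwitchesToOne Φ

/-- The gain of a walk: the product of the gains of its edges in order. -/
noncomputable def walkGain (Φ : TGainGraph V) {u v : V} (w : Φ.G.Walk u v) : ℂ :=
  (w.darts.map (fun d => Φ.A d.fst d.snd)).prod

/-- A gain graph is balanced if every cycle has gain `1`. -/
def Balanced (Φ : TGainGraph V) : Prop :=
  ∀ (u : V) (w : Φ.G.Walk u u), w.IsCycle → Φ.walkGain w = 1

/-- The restriction of a gain graph to a set of vertices. -/
noncomputable def restrict (Φ : TGainGraph V) (s : Set V) : TGainGraph s where
  G := Φ.G.induce s
  A := Φ.A.submatrix (Subtype.val) (Subtype.val)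
  herm := Φ.herm.submatrix _
  unitGain := fun i j h => Φ.unitGain i j h
  zeroGain := fun i j h => Φ.zeroGain i j h

/-- The vertex set of the connected component `c`. -/
def componentSet (Φ : TGainGraph V) (c : Φ.G.ConnectedComponent) : Set V :=
  {v | Φ.G.connectedComponentMk v = c}

/-- Every connected component of `Φ` is either an isolated vertex or a balanced
complete bipartite gain graph `(K_{k,k},1)` with a perfect matching. -/
def ComponentsBalancedCompleteBipartitePM (Φ : TGainGraph V) : Prop :=
  ∀ c : Φ.G.ConnectedComponent,
    (∀ v ∈ Φ.componentSet c, ∀ w, ¬ Φ.G.Adj v w) ∨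
    ∃ k : ℕ, 0 < k ∧
      (Φ.restrict (Φ.componentSet c)).SwitchEquivToCompleteBipartite k k

/-- The matching number of a graph. -/
noncomputable def matchingNumber (G : SimpleGraph V) : ℕ :=
  sSup {k | ∃ M : G.Subgraph, M.IsMatching ∧ M.edgeSet.ncard = k}

/-- The vertex cover number of a graph. -/
noncomputable def coverNumber (G : SimpleGraph V) : ℕ :=
  sInf {k | ∃ s : Finset V, s.card = k ∧ ∀ i j, G.Adj i j → i ∈ s ∨ j ∈ s}

/-- The number of odd cycles of a graph (counted by their edge sets). -/
noncomputable def oddCycleCount (G : SimpleGraph V) : ℕ :=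
  Set.ncard {s : Set (Sym2 V) | ∃ (u : V) (w : G.Walk u u),
    w.IsCycle ∧ Odd w.length ∧ s = {e | e ∈ w.edges}}

end TGainGraph

/-!
Switch `Φ` by the gains `g v` of the tree paths from a root: every tree edge then gets gain `1`,
and the only edge of the fundamental cycle `Cⱼ` of a non-tree edge `ij` that keeps a nontrivial
gain is `ij` itself, so `Re φ(Cⱼ) = Re (g i A i j conj (g j))`. For `x = conj ∘ g` this gives
`x* A x = 2 (n - 1) + 2 ∑ⱼ Re φ(Cⱼ)` while `x* x = n`, so the largest eigenvalue `λ₁` is at least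
`(2 (n - 1) + 2 ∑ⱼ Re φ(Cⱼ)) / n`. The eigenvalues sum to `tr A = 0`, whence `E(Φ) ≥ 2 λ₁`, and
`l ≤ (n - 1)(n - 2) / 2` turns this into the bound. For `(K_n, 1)` every cycle has gain `1` and
`(A + 1)² = n (A + 1)`, so the spectrum is `{n - 1, -1}` and `E = 2n - 2`.
-/

namespace SimpleGraph

variable {V : Type*}

namespace Walk

variable {G : SimpleGraph V} (A : Matrix V V ℂ)

noncomputable def gain {u v : V} (p : G.Walk u v) : ℂ :=
  (p.darts.map fun d => A d.fst d.snd).prod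

@[simp] lemma gain_nil {u : V} : (nil : G.Walk u u).gain A = 1 := rfl

@[simp] lemma gain_cons {u v w : V} (h : G.Adj u v) (p : G.Walk v w) :
    (cons h p).gain A = A u v * p.gain A := by
  simp [gain]

lemma gain_concat {u v w : V} (p : G.Walk u v) (h : G.Adj v w) :
    (p.concat h).gain A = p.gain A * A v w := by
  simp [gain, darts_concat]

lemma gain_adjMatrix [DecidableRel G.Adj] {u v : V} (p : G.Walk u v) :
    p.gain (G.adjMatrix ℂ) = 1 := by
  induction p with
  | nil => rfl
  | cons h p ih => simp [h, ih]

variable {A}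

lemma norm_gain (hA : ∀ i j, G.Adj i j → ‖A i j‖ = 1) {u v : V} (p : G.Walk u v) :
    ‖p.gain A‖ = 1 := by
  induction p with
  | nil => simp
  | cons h p ih => rw [gain_cons, norm_mul, ih, hA _ _ h, one_mul]

lemma gain_switch {g : V → ℂ} (hg : ∀ v, ‖g v‖ = 1) {u v : V} (p : G.Walk u v) :
    p.gain (.of fun i j => g i * A i j * starRingEnd ℂ (g j)) =
      g u * p.gain A * starRingEnd ℂ (g v) := by
  induction p with
  | nil => simp [Complex.mul_conj', hg]
  | @cons a b c h p ih =>
    have hb : starRingEnd ℂ (g b) * g b = 1 := by simp [Complex.conj_mul', hg]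
    simp only [gain_cons, ih, Matrix.of_apply]
    linear_combination (g a * A a b * (p.gain A * starRingEnd ℂ (g c))) * hb

lemma IsTrail.gain_eq_of_eq_one {B : Matrix V V ℂ} {u v : V} {p : G.Walk u v}
    (hp : p.IsTrail) {d₀ : G.Dart} (hd₀ : d₀ ∈ p.darts)
    (h1 : ∀ d ∈ p.darts, d.edge ≠ d₀.edge → B d.fst d.snd = 1) :
    p.gain B = B d₀.fst d₀.snd := by
  have hnodup : (p.darts.map Dart.edge).Nodup := by rw [← edges]; exact hp.edges_nodup
  rw [gain, ← List.prod_toFinset _ hnodup.of_map]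
  refine Finset.prod_eq_single_of_mem d₀ (List.mem_toFinset.2 hd₀) fun d hd hne => ?_
  exact h1 d (List.mem_toFinset.1 hd) fun he => hne (List.inj_on_of_nodup_map hnodup
    (List.mem_toFinset.1 hd) hd₀ he)

end Walk

variable {T : SimpleGraph V}

lemma IsAcyclic.path_eq_concat_or (hT : T.IsAcyclic) {r i j : V} (h : T.Adj i j)
    (p : T.Path r i) (q : T.Path r j) :
    (q : T.Walk r j) = (p : T.Walk r i).concat h ∨
      (p : T.Walk r i) = (q : T.Walk r j).concat h.symm := by
  by_cases hj : j ∈ (p : T.Walk r i).support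
  · right
    have htake : (p : T.Walk r i).takeUntil j hj = q :=
      congrArg Subtype.val ((hT.subsingleton_path _ _).elim ⟨_, p.2.takeUntil hj⟩ q)
    have hdrop : (p : T.Walk r i).dropUntil j hj = (Path.singleton h.symm : T.Walk j i) :=
      congrArg Subtype.val
        ((hT.subsingleton_path _ _).elim ⟨_, p.2.dropUntil hj⟩ (Path.singleton h.symm))
    rw [← (p : T.Walk r i).take_spec hj, htake, hdrop, Walk.concat_eq_append]
    rfl
  · left
    exact congrArg Subtype.val ((hT.subsingleton_path _ _).elim q ⟨_, p.2.concat hj h⟩)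

variable [DecidableEq V] {A : Matrix V V ℂ}

/-- The gain of some `T`-path from `r` to `v`; when `T` is a tree, of the unique one. -/
noncomputable def Connected.potential (hT : T.Connected) (A : Matrix V V ℂ) (r v : V) : ℂ :=
  ((hT.preconnected r v).some.toPath : T.Walk r v).gain A

lemma Connected.norm_potential (hT : T.Connected) (hA : ∀ i j, T.Adj i j → ‖A i j‖ = 1)
    (r v : V) : ‖hT.potential A r v‖ = 1 :=
  Walk.norm_gain hA _

lemma IsTree.potential_mul_mul_conj (hT : T.IsTree) (hA : A.IsHermitian)
    (hunit : ∀ i j, T.Adj i j → ‖A i j‖ = 1) (r : V) {i j : V} (h : T.Adj i j) :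
    hT.connected.potential A r i * A i j * starRingEnd ℂ (hT.connected.potential A r j) = 1 := by
  have hnorm := hT.connected.norm_potential hunit r
  set g := hT.connected.potential A r
  let P (v : V) : T.Path r v := (hT.connected.preconnected r v).some.toPath
  have hg (v : V) : g v = (P v : T.Walk r v).gain A := rfl
  rcases hT.isAcyclic.path_eq_concat_or h (P i) (P j) with hj | hi
  · rw [hg j, hj, Walk.gain_concat, ← hg, Complex.mul_conj', norm_mul, hnorm, hunit i j h]
    simp
  · rw [hg i, hi, Walk.gain_concat, ← hg, ← hA.apply j i, Complex.star_def]
    calc g j * starRingEnd ℂ (A i j) * A i j * starRingEnd ℂ (g j)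
        = (starRingEnd ℂ (g j) * g j) * (starRingEnd ℂ (A i j) * A i j) := by ring
      _ = 1 := by simp [Complex.conj_mul', hnorm, hunit i j h]

lemma IsTree.re_gain_eq_of_isTrail {G : SimpleGraph V} (hT : T.IsTree) (hA : A.IsHermitian)
    (hunit : ∀ i j, T.Adj i j → ‖A i j‖ = 1) (r : V) {u i j : V} {c : G.Walk u u}
    (hc : c.IsTrail) (he : s(i, j) ∈ c.edges)
    (hcT : ∀ f ∈ c.edges, f ≠ s(i, j) → f ∈ T.edgeSet) :
    (c.gain A).re = (hT.connected.potential A r i * A i j *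
      starRingEnd ℂ (hT.connected.potential A r j)).re := by
  have hnorm := hT.connected.norm_potential hunit r
  set g := hT.connected.potential A r
  have hswitch : c.gain A = c.gain (.of fun i j => g i * A i j * starRingEnd ℂ (g j)) := by
    rw [Walk.gain_switch hnorm, mul_comm (g u), mul_assoc, Complex.mul_conj', hnorm]
    simp
  obtain ⟨d₀, hd₀, hd₀e⟩ := List.mem_map.1 he
  rw [hswitch, hc.gain_eq_of_eq_one hd₀ fun d hd hne => ?_]
  · rcases Sym2.eq_iff.1 hd₀e with ⟨hi, hj⟩ | ⟨hj, hi⟩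
    · simp [hi, hj]
    · have hsymm : g j * A j i * starRingEnd ℂ (g i) =
          starRingEnd ℂ (g i * A i j * starRingEnd ℂ (g j)) := by
        rw [← hA.apply j i]
        simp only [map_mul, Complex.conj_conj, Complex.star_def]
        ring
      simp only [Matrix.of_apply, hi, hj, hsymm, Complex.conj_re]
  · rw [hd₀e] at hne
    exact hT.potential_mul_mul_conj hA hunit r (hcT _ (List.mem_map_of_mem hd) hne)

lemma IsTree.card_edgeFinset_sdiff [Fintype V] {G : SimpleGraph V}
    [DecidableRel G.Adj] [DecidableRel T.Adj] (hT : T.IsTree) (hle : T ≤ G) :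
    ((G.edgeSet \ T.edgeSet).toFinset.card : ℝ) = G.edgeFinset.card - (Fintype.card V - 1) := by
  have hdiff : (G.edgeSet \ T.edgeSet).toFinset = G.edgeFinset \ T.edgeFinset := by ext; simp
  have hsub := Finset.card_sdiff_add_card_eq_card (SimpleGraph.edgeFinset_subset_edgeFinset.2 hle)
  have htree : ((T.edgeFinset.card + 1 : ℕ) : ℝ) = Fintype.card V := congrArg _ hT.card_edgeFinset
  rw [hdiff, ← htree, ← hsub]
  push_cast
  ring

section

variable [Fintype V] (G : SimpleGraph V) [DecidableRel G.Adj]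

lemma sum_sum_ite_adj {M : Type*} [AddCommMonoid M] (f : Sym2 V → M) :
    ∑ i, ∑ j, (if G.Adj i j then f s(i, j) else 0) = 2 • ∑ e ∈ G.edgeFinset, f e := by
  have hdarts : (Finset.univ : Finset G.Dart).map ⟨Dart.toProd, Dart.toProd_injective⟩ =
      Finset.univ.filter fun p : V × V => G.Adj p.1 p.2 := by
    ext p
    simpa using ⟨fun ⟨d, hd⟩ => hd ▸ d.adj, fun h => ⟨⟨p, h⟩, rfl⟩⟩
  calc ∑ i, ∑ j, (if G.Adj i j then f s(i, j) else 0)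
      = ∑ d : G.Dart, f d.edge := by
        rw [← Fintype.sum_prod_type', ← Finset.sum_filter, ← hdarts, Finset.sum_map]
        rfl
    _ = ∑ e ∈ G.edgeFinset, ∑ d : G.Dart with d.edge = e, f d.edge :=
        (Finset.sum_fiberwise_of_maps_to (fun d _ => G.mem_edgeFinset.2 d.edge_mem) _).symm
    _ = ∑ e ∈ G.edgeFinset, 2 • f e := by
        refine Finset.sum_congr rfl fun e he => ?_
        rw [Finset.sum_congr rfl fun d hd => congrArg f (Finset.mem_filter.1 hd).2,
          Finset.sum_const, G.dart_edge_fiber_card e (G.mem_edgeFinset.1 he)]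
    _ = 2 • ∑ e ∈ G.edgeFinset, f e := Finset.smul_sum.symm

lemma adjMatrix_top_add_one_sq :
    ((⊤ : SimpleGraph V).adjMatrix ℂ + 1) ^ 2 =
      (Fintype.card V : ℂ) • ((⊤ : SimpleGraph V).adjMatrix ℂ + 1) := by
  have hJ : (⊤ : SimpleGraph V).adjMatrix ℂ + 1 = .of fun _ _ => 1 := by
    ext i j
    by_cases hij : i = j <;> simp [hij, one_apply]
  rw [hJ, sq]
  ext i j
  simp [mul_apply]

end

end SimpleGraph

lemma two_mul_le_sum_abs_of_sum_eq_zero {ι : Type*} [Fintype ι] {f : ι → ℝ}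
    (h : ∑ j, f j = 0) (i : ι) : 2 * f i ≤ ∑ j, |f j| :=
  calc 2 * f i ≤ |f i| + f i := by linarith [le_abs_self (f i)]
    _ ≤ ∑ j, (|f j| + f j) :=
      Finset.single_le_sum (f := fun j => |f j| + f j) (fun j _ => by linarith [neg_abs_le (f j)])
        (Finset.mem_univ i)
    _ = ∑ j, |f j| := by rw [Finset.sum_add_distrib, h, add_zero]

namespace Matrix

open scoped MatrixOrder in
lemma IsHermitian.re_dotProduct_mulVec_le {n : Type*} [Fintype n] [DecidableEq n]
    {A : Matrix n n ℂ} (hA : A.IsHermitian) {μ : ℝ} (hμ : ∀ i, hA.eigenvalues i ≤ μ)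
    (x : n → ℂ) : (star x ⬝ᵥ A *ᵥ x).re ≤ μ * (star x ⬝ᵥ x).re := by
  have hle : A ≤ algebraMap ℝ (Matrix n n ℂ) μ := by
    refine le_algebraMap_of_spectrum_le fun r hr => ?_
    obtain ⟨i, rfl⟩ := hA.spectrum_real_eq_range_eigenvalues ▸ hr
    exact hμ i
  have := (Complex.nonneg_iff.1 ((Matrix.le_iff.1 hle).dotProduct_mulVec_nonneg x)).1
  rw [Algebra.algebraMap_eq_smul_one, sub_mulVec, dotProduct_sub, smul_mulVec, one_mulVec,
    dotProduct_smul, Complex.sub_re, Complex.real_smul, Complex.re_ofReal_mul] at this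
  linarith

open Polynomial in
lemma IsHermitian.eval_eigenvalues_eq_zero {n : Type*} [Fintype n] [DecidableEq n]
    {A : Matrix n n ℂ} (hA : A.IsHermitian) {p : ℝ[X]} (hp : aeval A p = 0) (i : n) :
    p.eval (hA.eigenvalues i) = 0 := by
  have : Nonempty n := ⟨i⟩
  have := spectrum.subset_polynomial_aeval A p ⟨_, hA.eigenvalues_mem_spectrum_real i, rfl⟩
  rwa [hp, spectrum.zero_eq, Set.mem_singleton_iff] at this

lemma IsDiag.norm_apply_self_of_mem_unitaryGroup {n : Type*} [Fintype n] [DecidableEq n]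
    {U : Matrix n n ℂ} (hdiag : U.IsDiag) (hU : U ∈ unitaryGroup n ℂ) (v : n) :
    ‖U v v‖ = 1 := by
  have h := congrFun (congrFun (mem_unitaryGroup_iff.1 hU) v) v
  rw [mul_apply, Finset.sum_eq_single v (fun k _ hk => by rw [hdiag hk.symm, zero_mul])
    (by simp), one_apply_eq, star_apply, Complex.star_def, Complex.mul_conj'] at h
  exact (pow_eq_one_iff_of_nonneg (norm_nonneg _) two_ne_zero).1 (by exact_mod_cast h)

lemma IsDiag.mul_mul_conjTranspose {n : Type*} [Fintype n] [DecidableEq n]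
    {U : Matrix n n ℂ} (hdiag : U.IsDiag) (B : Matrix n n ℂ) :
    U * B * Uᴴ = .of fun i j => U i i * B i j * starRingEnd ℂ (U j j) := by
  ext i j
  rw [← hdiag.diagonal_diag]
  simp [diagonal_conjTranspose]

end Matrix

namespace TGainGraph

open SimpleGraph

variable {V : Type*} [Fintype V] [DecidableEq V]

lemma walkGain_eq_gain (Φ : TGainGraph V) {u v : V} (p : Φ.G.Walk u v) :
    Φ.walkGain p = p.gain Φ.A := rfl

lemma trace_A_eq_zero (Φ : TGainGraph V) : Φ.A.trace = 0 :=
  Finset.sum_eq_zero fun i _ => Φ.zeroGain i i (Φ.G.irrefl)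

lemma sum_eigenvalues_eq_zero (Φ : TGainGraph V) : ∑ i, Φ.herm.eigenvalues i = 0 := by
  have h := Φ.herm.trace_eq_sum_eigenvalues
  rw [trace_A_eq_zero] at h
  simpa using (congrArg Complex.re h).symm

lemma sum_re_walkGain_le_card (Φ : TGainGraph V) {ι : Type*} (s : Finset ι) {a b : ι → V}
    (w : ∀ i, Φ.G.Walk (a i) (b i)) : ∑ i ∈ s, (Φ.walkGain (w i)).re ≤ s.card := by
  refine (Finset.sum_le_card_nsmul s _ 1 fun i _ => ?_).trans (by simp)
  exact (Complex.re_le_norm _).trans (SimpleGraph.Walk.norm_gain Φ.unitGain _).le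

lemma re_dotProduct_mulVec_star_potential (Φ : TGainGraph V) {T : SimpleGraph V}
    (hle : T ≤ Φ.G) (htree : T.IsTree) (r : V) (u : Sym2 V → V)
    (w : ∀ e : Sym2 V, Φ.G.Walk (u e) (u e))
    (hw : ∀ e ∈ Φ.G.edgeSet \ T.edgeSet, (w e).IsCycle ∧ e ∈ (w e).edges ∧
      ∀ f ∈ (w e).edges, f ≠ e → f ∈ T.edgeSet) :
    (star (star (htree.connected.potential Φ.A r)) ⬝ᵥ
      Φ.A *ᵥ star (htree.connected.potential Φ.A r)).re = 2 * ((Fintype.card V : ℝ) - 1 +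
      ∑ e ∈ (Φ.G.edgeSet \ T.edgeSet).toFinset, (Φ.walkGain (w e)).re) := by
  have hunit : ∀ i j, T.Adj i j → ‖Φ.A i j‖ = 1 := fun i j h => Φ.unitGain i j (hle h)
  set g := htree.connected.potential Φ.A r
  let f : Sym2 V → ℝ := fun e => if e ∈ T.edgeSet then 1 else ((w e).gain Φ.A).re
  have hterm (i j : V) :
      (g i * Φ.A i j * starRingEnd ℂ (g j)).re = if Φ.G.Adj i j then f s(i, j) else 0 := by
    by_cases hij : Φ.G.Adj i j
    · by_cases hT : T.Adj i j
      · simp [f, hij, hT, g, htree.potential_mul_mul_conj Φ.herm hunit r hT]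
      · obtain ⟨hcyc, he, hcT⟩ := hw s(i, j) ⟨hij, hT⟩
        simp only [hij, hT, f, if_true, mem_edgeSet, if_false]
        exact (htree.re_gain_eq_of_isTrail Φ.herm hunit r hcyc.isCircuit.isTrail he hcT).symm
    · simp [hij, Φ.zeroGain i j hij]
  have hexpand : (star (star g) ⬝ᵥ Φ.A *ᵥ star g).re =
      ∑ i, ∑ j, (g i * Φ.A i j * starRingEnd ℂ (g j)).re := by
    simp [dotProduct, mulVec, Finset.mul_sum, Complex.re_sum, mul_assoc]
  have hdiff : Φ.G.edgeFinset \ T.edgeFinset = (Φ.G.edgeSet \ T.edgeSet).toFinset := by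
    ext e; simp
  have hT : ∑ e ∈ T.edgeFinset, f e = (Fintype.card V : ℝ) - 1 := by
    rw [Finset.sum_congr rfl fun e he => if_pos (mem_edgeFinset.1 he), Finset.sum_const,
      ← htree.card_edgeFinset]
    simp
  have hS : ∑ e ∈ Φ.G.edgeFinset \ T.edgeFinset, f e =
      ∑ e ∈ (Φ.G.edgeSet \ T.edgeSet).toFinset, (Φ.walkGain (w e)).re := by
    rw [hdiff]
    exact Finset.sum_congr rfl fun e he => if_neg (Set.mem_toFinset.1 he).2
  rw [hexpand, Finset.sum_congr rfl fun i _ => Finset.sum_congr rfl fun j _ => hterm i j,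
    sum_sum_ite_adj, ← Finset.sum_sdiff (edgeFinset_subset_edgeFinset.2 hle), hS, hT,
    nsmul_eq_mul]
  push_cast
  ring

lemma four_mul_le_card_mul_energy (Φ : TGainGraph V) {T : SimpleGraph V} (hle : T ≤ Φ.G)
    (htree : T.IsTree) (u : Sym2 V → V) (w : ∀ e : Sym2 V, Φ.G.Walk (u e) (u e))
    (hw : ∀ e ∈ Φ.G.edgeSet \ T.edgeSet, (w e).IsCycle ∧ e ∈ (w e).edges ∧
      ∀ f ∈ (w e).edges, f ≠ e → f ∈ T.edgeSet) :
    4 * ((Fintype.card V : ℝ) - 1 +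
      ∑ e ∈ (Φ.G.edgeSet \ T.edgeSet).toFinset, (Φ.walkGain (w e)).re) ≤
      Fintype.card V * Φ.energy := by
  have : Nonempty V := htree.connected.nonempty
  have hg := htree.connected.norm_potential (fun i j h => Φ.unitGain i j (hle h))
    (Classical.arbitrary V)
  set g := htree.connected.potential Φ.A (Classical.arbitrary V)
  obtain ⟨i₀, -, hi₀⟩ := Finset.exists_max_image Finset.univ Φ.herm.eigenvalues
    Finset.univ_nonempty
  have hnorm : (star (star g) ⬝ᵥ star g).re = Fintype.card V := by
    simp [dotProduct, Complex.mul_conj', hg]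
  have hray := Φ.herm.re_dotProduct_mulVec_le (fun i => hi₀ i (Finset.mem_univ i)) (star g)
  rw [re_dotProduct_mulVec_star_potential Φ hle htree _ u w hw, hnorm] at hray
  have hE : 2 * Φ.herm.eigenvalues i₀ ≤ Φ.energy :=
    two_mul_le_sum_abs_of_sum_eq_zero Φ.sum_eigenvalues_eq_zero i₀
  nlinarith [mul_le_mul_of_nonneg_left hE (Nat.cast_nonneg (α := ℝ) (Fintype.card V))]

lemma SwitchesToOne.walkGain_eq_one {Φ : TGainGraph V} (h : Φ.SwitchesToOne) {u : V}
    (c : Φ.G.Walk u u) : Φ.walkGain c = 1 := by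
  obtain ⟨U, hdiag, hU, hA⟩ := h
  have hnorm := hdiag.norm_apply_self_of_mem_unitaryGroup hU
  rw [walkGain_eq_gain, hA, hdiag.mul_mul_conjTranspose, SimpleGraph.Walk.gain_switch hnorm,
    SimpleGraph.Walk.gain_adjMatrix, mul_one, Complex.mul_conj', hnorm]
  simp

open Polynomial in
lemma SwitchesToOne.energy_eq_of_eq_top [Nonempty V] {Φ : TGainGraph V} (h : Φ.SwitchesToOne)
    (hG : Φ.G = ⊤) :
    Φ.energy = 2 * Fintype.card V - 2 := by
  obtain ⟨U, -, hU, hA⟩ := h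
  set n := (Fintype.card V : ℝ)
  set p : ℝ[X] := (X + 1) ^ 2 - C n * (X + 1)
  have hB : aeval ((⊤ : SimpleGraph V).adjMatrix ℂ) p = 0 := by
    simp only [p, map_sub, map_mul, map_pow, map_add, aeval_X, aeval_C, map_one,
      SimpleGraph.adjMatrix_top_add_one_sq, Algebra.algebraMap_eq_smul_one, smul_mul_assoc,
      one_mul]
    rw [sub_eq_zero, Nat.cast_smul_eq_nsmul, Nat.cast_smul_eq_nsmul]
  have hp : aeval Φ.A p = 0 := by
    have : Φ.A = Unitary.conjStarAlgAut ℝ _ ⟨U, hU⟩ ((⊤ : SimpleGraph V).adjMatrix ℂ) := by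
      rw [Unitary.conjStarAlgAut_apply, hA, hG]
      congr
    rw [this, aeval_algHom_apply, hB, map_zero]
  have hn : 1 ≤ n := Nat.one_le_cast.2 Fintype.card_pos
  have habs (i : V) :
      n * |Φ.herm.eigenvalues i| = (n - 2) * Φ.herm.eigenvalues i + (2 * n - 2) := by
    have hroot := Φ.herm.eval_eigenvalues_eq_zero hp i
    simp only [p, eval_sub, eval_mul, eval_pow, eval_add, eval_X, eval_one, eval_C] at hroot
    rcases mul_eq_zero.1 (show (Φ.herm.eigenvalues i + 1) * (Φ.herm.eigenvalues i + 1 - n) = 0 by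
      linear_combination hroot) with h | h
    · rw [show Φ.herm.eigenvalues i = -1 by linarith]
      norm_num
      ring
    · rw [show Φ.herm.eigenvalues i = n - 1 by linarith, abs_of_nonneg (by linarith)]
      ring
  have hmul : n * Φ.energy = n * (2 * n - 2) := by
    rw [energy, Finset.mul_sum, Finset.sum_congr rfl fun i _ => habs i, Finset.sum_add_distrib,
      ← Finset.mul_sum, sum_eigenvalues_eq_zero, Finset.sum_const, Finset.card_univ, nsmul_eq_mul]
    ring
  exact mul_left_cancel₀ (by positivity) hmul

end TGainGraph

/-- Multiplied by `n` and combined with `hnE`, the claim becomes `(2n − 4) S ≤ (n − 1)(n − 2)²`,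
which follows from `S ≤ l ≤ (n − 1)(n − 2) / 2`. -/
lemma two_mul_add_le_of_four_mul_le {n : ℕ} (hn : 1 ≤ n) {l S E : ℝ} (hE : 0 ≤ E)
    (hnE : 4 * ((n : ℝ) - 1 + S) ≤ n * E) (hS : S ≤ l) (hl : 2 * l ≤ ((n : ℝ) - 1) * (n - 2)) :
    2 * S + (5 * (n : ℝ) - (n : ℝ) ^ 2 - 4) ≤ E := by
  rcases Nat.lt_or_ge n 2 with hn2 | hn2
  · obtain rfl : n = 1 := by omega
    norm_num at hl ⊢
    linarith
  · have hn2 : (2 : ℝ) ≤ n := by exact_mod_cast hn2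
    refine le_of_mul_le_mul_left ?_ (by linarith : (0 : ℝ) < n)
    nlinarith [mul_le_mul_of_nonneg_left hS (by linarith : (0 : ℝ) ≤ 2 * n - 4),
      mul_le_mul_of_nonneg_left hl (by linarith : (0 : ℝ) ≤ n - 2)]

open TGainGraph in
theorem energy_ge_fundamental_cycles_general {V : Type*} [Fintype V] [DecidableEq V]
    (Φ : TGainGraph V)
    (T : SimpleGraph V) (hle : T ≤ Φ.G) (htree : T.IsTree)
    (u : Sym2 V → V) (w : ∀ e : Sym2 V, Φ.G.Walk (u e) (u e))
    (hw : ∀ e ∈ Φ.G.edgeSet \ T.edgeSet, (w e).IsCycle ∧ e ∈ (w e).edges ∧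
      ∀ f ∈ (w e).edges, f ≠ e → f ∈ T.edgeSet) :
    2 * ∑ e ∈ (Φ.G.edgeSet \ T.edgeSet).toFinset, (Φ.walkGain (w e)).re
        + (5 * (Fintype.card V : ℝ) - (Fintype.card V : ℝ) ^ 2 - 4) ≤ Φ.energy ∧
    ((Φ.G = ⊤ ∧ Φ.SwitchesToOne) →
      Φ.energy = 2 * ∑ e ∈ (Φ.G.edgeSet \ T.edgeSet).toFinset, (Φ.walkGain (w e)).re
        + (5 * (Fintype.card V : ℝ) - (Fintype.card V : ℝ) ^ 2 - 4)) := by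
  have : Nonempty V := htree.connected.nonempty
  have hl := htree.card_edgeFinset_sdiff hle
  refine ⟨?_, fun ⟨hG, hone⟩ => ?_⟩
  · have hedges : (Φ.G.edgeFinset.card : ℝ) ≤ Fintype.card V * (Fintype.card V - 1) / 2 :=
      (Nat.cast_le.2 Φ.G.card_edgeFinset_le_card_choose_two).trans_eq (Nat.cast_choose_two ℝ _)
    refine two_mul_add_le_of_four_mul_le Fintype.card_pos
      (Finset.sum_nonneg fun _ _ => abs_nonneg _) (Φ.four_mul_le_card_mul_energy hle htree u w hw)
      (Φ.sum_re_walkGain_le_card _ w) ?_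
    linarith
  · have hedges : (Φ.G.edgeFinset.card : ℝ) = Fintype.card V * (Fintype.card V - 1) / 2 := by
      rw [← Nat.cast_choose_two]
      congr 1
      convert SimpleGraph.card_edgeFinset_top_eq_card_choose_two (V := V)
    simp only [hone.walkGain_eq_one, Complex.one_re, Finset.sum_const, nsmul_eq_mul, mul_one]
    rw [hone.energy_eq_of_eq_top hG, hl, hedges]
    ring

open TGainGraph in
/-- Lower bound for the energy via the gains of the fundamental cycles with
respect to a spanning tree `T`:
`E(Φ) ≥ 2 ∑ⱼ Re(φ(Cⱼ)) + (5n − n² − 4)`, with equality when `Φ ∼ (K_n, 1)`. -/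
theorem energy_ge_fundamental_cycles {V : Type*} [Fintype V] [DecidableEq V]
    (Φ : TGainGraph V) (hconn : Φ.G.Connected)
    (T : SimpleGraph V) (hle : T ≤ Φ.G) (htree : T.IsTree)
    (u : Sym2 V → V) (w : ∀ e : Sym2 V, Φ.G.Walk (u e) (u e))
    (hw : ∀ e ∈ Φ.G.edgeSet \ T.edgeSet, (w e).IsCycle ∧ e ∈ (w e).edges ∧
      ∀ f ∈ (w e).edges, f ≠ e → f ∈ T.edgeSet) :
    2 * ∑ e ∈ (Φ.G.edgeSet \ T.edgeSet).toFinset, (Φ.walkGain (w e)).re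
        + (5 * (Fintype.card V : ℝ) - (Fintype.card V : ℝ) ^ 2 - 4) ≤ Φ.energy ∧
    ((Φ.G = ⊤ ∧ Φ.SwitchesToOne) →
      Φ.energy = 2 * ∑ e ∈ (Φ.G.edgeSet \ T.edgeSet).toFinset, (Φ.walkGain (w e)).re
        + (5 * (Fintype.card V : ℝ) - (Fintype.card V : ℝ) ^ 2 - 4)) :=
  energy_ge_fundamental_cycles_general Φ T hle htree u w hw
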